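/- On the noncommutative algebraic 2-torus quantum principal bundle B := A^{coH} ⊆ A = O_θ(T²) with H = O(U(1)) and the complete calculus with Ω¹(A) = span_A{du, dv}, every connection 1-form s: Λ¹ → Ω¹(A) is a convex combination of the connection 1-forms t^{-1}dt ↦ u^{-1}du + b db' and t^{-1}dt ↦ v^{-1}dv + b db', for b, b' ∈ B. -/

import Mathlib

open TensorProduct

noncomputable section

namespace QPBPaper

variable (k : Type) [Field k]

/-! ### Convolution algebra -/

/-- Convolution product of linear maps from a coalgebra to an algebra. -/
def conv {C A : Type} [AddCommGroup C] [Module k C] [Coalgebra k C]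
    [Ring A] [Algebra k A] (f g : C →ₗ[k] A) : C →ₗ[k] A :=
  LinearMap.mul' k A ∘ₗ TensorProduct.map f g ∘ₗ Coalgebra.comul

/-- Convolution unit `η ∘ ε`. -/
def convUnit {C A : Type} [AddCommGroup C] [Module k C] [Coalgebra k C]
    [Ring A] [Algebra k A] : C →ₗ[k] A :=
  Algebra.linearMap k A ∘ₗ Coalgebra.counit

def IsConvInvertible {C A : Type} [AddCommGroup C] [Module k C] [Coalgebra k C]
    [Ring A] [Algebra k A] (f : C →ₗ[k] A) : Prop :=
  ∃ g : C →ₗ[k] A, conv k f g = convUnit k ∧ conv k g f = convUnit k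

/-! ### Balanced tensor products over (co)invariants -/

section BalQ
variable {Ω : Type} [Ring Ω] [Algebra k Ω]

/-- The `S`-balancing relations inside `Ω ⊗ Ω`. -/
def balQ (S : Set Ω) : Submodule k (Ω ⊗[k] Ω) :=
  Submodule.span k
    {x | ∃ ω η β : Ω, β ∈ S ∧ x = (ω * β) ⊗ₜ[k] η - ω ⊗ₜ[k] (β * η)}

variable (S : Set Ω)

/-- The balanced tensor product `Ω ⊗_S Ω`. -/
abbrev BQuot := (Ω ⊗[k] Ω) ⧸ balQ k S

/-- Projection to the balanced tensor product. -/
def mkBQ : Ω ⊗[k] Ω →ₗ[k] BQuot k S := Submodule.mkQ (balQ k S)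

/-- Left multiplication on the first factor of `Ω ⊗_S Ω`. -/
def lBQ (x : Ω) : BQuot k S →ₗ[k] BQuot k S :=
  Submodule.mapQ _ _ (LinearMap.rTensor Ω (LinearMap.mulLeft k x)) (by
    rw [balQ, Submodule.span_le]
    rintro z ⟨ω, η, β, hβ, rfl⟩
    simp only [SetLike.mem_coe, Submodule.mem_comap, map_sub, LinearMap.rTensor_tmul,
      LinearMap.mulLeft_apply]
    apply Submodule.subset_span
    exact ⟨x * ω, η, β, hβ, by rw [mul_assoc]⟩)

/-- Right multiplication on the second factor of `Ω ⊗_S Ω`. -/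
def rBQ (x : Ω) : BQuot k S →ₗ[k] BQuot k S :=
  Submodule.mapQ _ _ (LinearMap.lTensor Ω (LinearMap.mulRight k x)) (by
    rw [balQ, Submodule.span_le]
    rintro z ⟨ω, η, β, hβ, rfl⟩
    simp only [SetLike.mem_coe, Submodule.mem_comap, map_sub, LinearMap.lTensor_tmul,
      LinearMap.mulRight_apply]
    apply Submodule.subset_span
    exact ⟨ω, η * x, β, hβ, by rw [mul_assoc]⟩)

/-- The multiplication `Ω ⊗_S Ω → Ω`. -/
def mBQ : BQuot k S →ₗ[k] Ω :=
  Submodule.liftQ _ (LinearMap.mul' k Ω) (by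
    rw [balQ, Submodule.span_le]
    rintro z ⟨ω, η, β, hβ, rfl⟩
    simp only [SetLike.mem_coe, LinearMap.mem_ker, map_sub, LinearMap.mul'_apply]
    rw [mul_assoc, sub_self])

/-- The balancing relations in positions `(1,2)` and `(2,3)` of `Ω ⊗ Ω ⊗ Ω`. -/
def bal3 : Submodule k (Ω ⊗[k] (Ω ⊗[k] Ω)) :=
  Submodule.span k
    ({x | ∃ ω η ζ β : Ω, β ∈ S ∧
        x = (ω * β) ⊗ₜ[k] (η ⊗ₜ[k] ζ) - ω ⊗ₜ[k] ((β * η) ⊗ₜ[k] ζ)} ∪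
     {x | ∃ ω η ζ β : Ω, β ∈ S ∧
        x = ω ⊗ₜ[k] ((η * β) ⊗ₜ[k] ζ) - ω ⊗ₜ[k] (η ⊗ₜ[k] (β * ζ))})

/-- The triple balanced tensor product `Ω ⊗_S Ω ⊗_S Ω`. -/
abbrev TQuot := (Ω ⊗[k] (Ω ⊗[k] Ω)) ⧸ bal3 k S

/-- Projection to the triple balanced tensor product. -/
def mkTQ : Ω ⊗[k] (Ω ⊗[k] Ω) →ₗ[k] TQuot k S := Submodule.mkQ (bal3 k S)

/-- Tensoring on the right by `z`: `Ω ⊗_S Ω → Ω ⊗_S Ω ⊗_S Ω`. -/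
def g12 (z : Ω) : BQuot k S →ₗ[k] TQuot k S :=
  Submodule.mapQ _ _ (LinearMap.lTensor Ω ((TensorProduct.mk k Ω Ω).flip z)) (by
    rw [balQ, Submodule.span_le]
    rintro w ⟨ω, η, β, hβ, rfl⟩
    simp only [SetLike.mem_coe, Submodule.mem_comap, map_sub, LinearMap.lTensor_tmul,
      TensorProduct.mk_apply, LinearMap.flip_apply]
    apply Submodule.subset_span
    exact Or.inl ⟨ω, η, z, β, hβ, rfl⟩)

/-- Tensoring on the left by `x`: `Ω ⊗_S Ω → Ω ⊗_S Ω ⊗_S Ω`. -/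
def g23 (x : Ω) : BQuot k S →ₗ[k] TQuot k S :=
  Submodule.mapQ _ _ (TensorProduct.mk k Ω (Ω ⊗[k] Ω) x) (by
    rw [balQ, Submodule.span_le]
    rintro w ⟨ω, η, β, hβ, rfl⟩
    simp only [SetLike.mem_coe, Submodule.mem_comap, map_sub, TensorProduct.mk_apply,
      TensorProduct.tmul_sub]
    apply Submodule.subset_span
    exact Or.inr ⟨x, ω, η, β, hβ, rfl⟩)

/-- Multiplication of the first two factors `Ω ⊗_S Ω ⊗_S Ω → Ω ⊗_S Ω`. -/
def m12 : TQuot k S →ₗ[k] BQuot k S :=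
  Submodule.liftQ _ (mkBQ k S ∘ₗ LinearMap.rTensor Ω (LinearMap.mul' k Ω) ∘ₗ
      (TensorProduct.assoc k Ω Ω Ω).symm.toLinearMap) (by
    rw [bal3, Submodule.span_le]
    rintro w (⟨ω, η, ζ, β, hβ, rfl⟩ | ⟨ω, η, ζ, β, hβ, rfl⟩) <;>
      simp only [SetLike.mem_coe, LinearMap.mem_ker, map_sub, LinearMap.comp_apply,
        LinearEquiv.coe_coe, TensorProduct.assoc_symm_tmul, LinearMap.rTensor_tmul,
        LinearMap.mul'_apply, TensorProduct.tmul_sub, map_sub]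
    · rw [mul_assoc, sub_self]
    · rw [mkBQ, Submodule.mkQ_apply, Submodule.mkQ_apply, ← Submodule.Quotient.mk_sub,
        Submodule.Quotient.mk_eq_zero]
      apply Submodule.subset_span
      exact ⟨ω * η, ζ, β, hβ, by rw [mul_assoc]⟩)

/-- Multiplication of the last two factors `Ω ⊗_S Ω ⊗_S Ω → Ω ⊗_S Ω`. -/
def m23 : TQuot k S →ₗ[k] BQuot k S :=
  Submodule.liftQ _ (mkBQ k S ∘ₗ LinearMap.lTensor Ω (LinearMap.mul' k Ω)) (by
    rw [bal3, Submodule.span_le]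
    rintro w (⟨ω, η, ζ, β, hβ, rfl⟩ | ⟨ω, η, ζ, β, hβ, rfl⟩) <;>
      simp only [SetLike.mem_coe, LinearMap.mem_ker, map_sub, LinearMap.comp_apply,
        LinearMap.lTensor_tmul, LinearMap.mul'_apply]
    · rw [mkBQ, Submodule.mkQ_apply, Submodule.mkQ_apply, ← Submodule.Quotient.mk_sub,
        Submodule.Quotient.mk_eq_zero]
      apply Submodule.subset_span
      exact ⟨ω, η * ζ, β, hβ, by rw [mul_assoc]⟩
    · rw [mul_assoc, sub_self])

end BalQ


/-! ### Comodule algebras and Hopf–Galois extensions -/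

/-- A right `H`-comodule algebra structure on `A`. -/
structure ComodAlg (H A : Type) [Ring H] [Bialgebra k H] [Ring A] [Algebra k A] where
  ρ : A →ₗ[k] A ⊗[k] H
  ρ_one : ρ 1 = 1
  ρ_mul : ∀ a b : A, ρ (a * b) = ρ a * ρ b
  counit_ρ : ∀ a : A,
    TensorProduct.rid k A (LinearMap.lTensor A (Coalgebra.counit (R := k) (A := H)) (ρ a)) = a
  coassoc_ρ : ∀ a : A,
    TensorProduct.assoc k A H H (LinearMap.rTensor H ρ (ρ a))
      = LinearMap.lTensor A (Coalgebra.comul (R := k) (A := H)) (ρ a)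

variable {k}

/-- The subalgebra of coinvariant elements `B = A^{co H}`. -/
def ComodAlg.coinv {H A : Type} [Ring H] [Bialgebra k H] [Ring A] [Algebra k A]
    (c : ComodAlg k H A) : Subalgebra k A where
  carrier := {a : A | c.ρ a = a ⊗ₜ[k] (1 : H)}
  mul_mem' := by
    intro a b ha hb
    simp only [Set.mem_setOf_eq] at *
    rw [c.ρ_mul, ha, hb, Algebra.TensorProduct.tmul_mul_tmul, mul_one]
  one_mem' := by
    simpa [Algebra.TensorProduct.one_def] using c.ρ_one
  add_mem' := by
    intro a b ha hb
    simp only [Set.mem_setOf_eq] at *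
    rw [map_add, ha, hb, TensorProduct.add_tmul]
  algebraMap_mem' := by
    intro r
    show c.ρ (algebraMap k A r) = algebraMap k A r ⊗ₜ[k] (1 : H)
    rw [Algebra.algebraMap_eq_smul_one, map_smul, c.ρ_one,
      Algebra.TensorProduct.one_def, smul_tmul']

lemma ComodAlg.mem_coinv {H A : Type} [Ring H] [Bialgebra k H] [Ring A] [Algebra k A]
    (c : ComodAlg k H A) {a : A} : a ∈ c.coinv ↔ c.ρ a = a ⊗ₜ[k] (1 : H) := Iff.rfl

variable (k)

/-- The `B`-balancing relations inside `A ⊗ A`. -/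
def balancer {H A : Type} [Ring H] [Bialgebra k H] [Ring A] [Algebra k A]
    (c : ComodAlg k H A) : Submodule k (A ⊗[k] A) :=
  balQ k (c.coinv : Set A)

/-- The balanced tensor product `A ⊗_B A`. -/
abbrev AtB {H A : Type} [Ring H] [Bialgebra k H] [Ring A] [Algebra k A]
    (c : ComodAlg k H A) : Type :=
  (A ⊗[k] A) ⧸ balancer k c

/-- Projection `A ⊗ A → A ⊗_B A`. -/
def mkAtB {H A : Type} [Ring H] [Bialgebra k H] [Ring A] [Algebra k A]
    (c : ComodAlg k H A) : A ⊗[k] A →ₗ[k] AtB k c :=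
  Submodule.mkQ (balancer k c)

/-- The Galois map before descending to `A ⊗_B A`. -/
def chi0 {H A : Type} [Ring H] [Bialgebra k H] [Ring A] [Algebra k A]
    (c : ComodAlg k H A) : A ⊗[k] A →ₗ[k] A ⊗[k] H :=
  LinearMap.mul' k (A ⊗[k] H) ∘ₗ
    TensorProduct.map (Algebra.TensorProduct.includeLeft (R := k) (S := k)
      (A := A) (B := H)).toLinearMap c.ρ

lemma chi0_tmul {H A : Type} [Ring H] [Bialgebra k H] [Ring A] [Algebra k A]
    (c : ComodAlg k H A) (x y : A) :
    chi0 k c (x ⊗ₜ[k] y) = (x ⊗ₜ[k] (1 : H)) * c.ρ y := by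
  simp [chi0]

lemma balancer_le_ker_chi0 {H A : Type} [Ring H] [Bialgebra k H] [Ring A] [Algebra k A]
    (c : ComodAlg k H A) : balancer k c ≤ LinearMap.ker (chi0 k c) := by
  rw [balancer, balQ, Submodule.span_le]
  rintro x ⟨a, y, b, hb, rfl⟩
  rw [SetLike.mem_coe] at hb
  rw [SetLike.mem_coe, LinearMap.mem_ker, map_sub, chi0_tmul, chi0_tmul,
    c.ρ_mul, c.mem_coinv.mp hb, ← mul_assoc, Algebra.TensorProduct.tmul_mul_tmul,
    mul_one, sub_self]

/-- The canonical Galois map `χ : A ⊗_B A → A ⊗ H`. -/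
def chiQ {H A : Type} [Ring H] [Bialgebra k H] [Ring A] [Algebra k A]
    (c : ComodAlg k H A) : AtB k c →ₗ[k] A ⊗[k] H :=
  Submodule.liftQ (balancer k c) (chi0 k c) (balancer_le_ker_chi0 k c)

/-! ### Faithful flatness over the coinvariant subalgebra -/

/-- `B`-balancing relations in `A ⊗ M` for a left `B`-module `M`. -/
def relBalancer {A : Type} [Ring A] [Algebra k A] (B : Subalgebra k A)
    (M : Type) [AddCommGroup M] [Module k M] [Module B M] [IsScalarTower k B M] :
    Submodule k (A ⊗[k] M) :=
  Submodule.span k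
    {x | ∃ (a : A) (b : B) (m : M), x = (a * (b : A)) ⊗ₜ[k] m - a ⊗ₜ[k] (b • m)}

/-- `A` is a faithfully flat right `B`-module: tensoring over `B` preserves and
reflects injectivity resp. nontriviality. -/
def IsFaithfullyFlatOver {A : Type} [Ring A] [Algebra k A] (B : Subalgebra k A) : Prop :=
  (∀ (M N : Type) [AddCommGroup M] [Module k M] [Module B M] [IsScalarTower k B M]
      [AddCommGroup N] [Module k N] [Module B N] [IsScalarTower k B N]
      (f : M →ₗ[B] N), Function.Injective f →
      ∀ x : A ⊗[k] M,
        LinearMap.lTensor A (f.restrictScalars k) x ∈ relBalancer k B N →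
          x ∈ relBalancer k B M) ∧
  (∀ (M : Type) [AddCommGroup M] [Module k M] [Module B M] [IsScalarTower k B M],
      (⊥ : Submodule k M) ≠ ⊤ → relBalancer k B M ≠ ⊤)

/-- A quantum principal bundle: a faithfully flat Hopf–Galois extension. -/
structure QPB (H A : Type) [Ring H] [HopfAlgebra k H] [Ring A] [Algebra k A]
    extends ComodAlg k H A where
  antipode_bij : Function.Bijective (HopfAlgebra.antipode (R := k) (A := H))
  galois : Function.Bijective (chiQ k toComodAlg)
  ff : IsFaithfullyFlatOver k toComodAlg.coinv


/-- An (ℕ-graded) differential graded algebra over `k`. -/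
structure GDA where
  Ω : Type
  [ring : Ring Ω]
  [alg : Algebra k Ω]
  gr : ℕ → Submodule k Ω
  [graded : GradedAlgebra gr]
  d : Ω →ₗ[k] Ω
  d_d : ∀ x, d (d x) = 0
  d_mem : ∀ n, ∀ x ∈ gr n, d x ∈ gr (n + 1)
  leibniz : ∀ n, ∀ x ∈ gr n, ∀ y, d (x * y) = d x * y + ((-1 : k) ^ n) • (x * d y)

attribute [instance] GDA.ring GDA.alg GDA.graded

/-- A differential calculus on the algebra `A`: a DGA with `Ω⁰ = A` which is
generated in the sense `Ωⁿ = span { a⁰ da¹ ∧ ⋯ ∧ daⁿ }`. -/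
structure DC (A : Type) [Ring A] [Algebra k A] extends GDA k where
  ι : A →ₐ[k] Ω
  ι_inj : Function.Injective ι
  gr_zero : gr 0 = LinearMap.range ι.toLinearMap
  gr_succ : ∀ n : ℕ, gr (n + 1) = Submodule.span k
    {x | ∃ (a : A) (f : Fin (n + 1) → A),
      x = ι a * (List.ofFn fun i => d (ι (f i))).prod}

variable {k}

/-- The Koszul sign operator `J x = (-1)^{|x|} x`. -/
def GDA.J (D : GDA k) : D.Ω →ₗ[k] D.Ω :=
  (DirectSum.toModule k ℕ D.Ω fun n => ((-1 : k) ^ n) • (D.gr n).subtype) ∘ₗ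
    (DirectSum.decomposeLinearEquiv D.gr).toLinearMap

/-- The Koszul braiding flip `x ⊗ y ↦ (-1)^{|x||y|} y ⊗ x`. -/
def koszulFlip (D E : GDA k) : D.Ω ⊗[k] E.Ω →ₗ[k] E.Ω ⊗[k] D.Ω :=
  (DirectSum.toModule k ℕ (E.Ω ⊗[k] D.Ω) fun n =>
      (TensorProduct.comm k D.Ω E.Ω).toLinearMap ∘ₗ
        TensorProduct.map (D.gr n).subtype (E.J ^ n)) ∘ₗ
    (TensorProduct.directSumLeft k k (fun n => D.gr n) E.Ω).toLinearMap ∘ₗ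
    LinearMap.rTensor E.Ω (DirectSum.decomposeLinearEquiv D.gr).toLinearMap

/-- Multiplication of the graded (Koszul-signed) tensor product algebra
`Ω(D) ⊗ Ω(E)`: `(x ⊗ h)(y ⊗ g) = (-1)^{|h||y|} (xy) ⊗ (hg)`. -/
def gmulT (D E : GDA k) :
    (D.Ω ⊗[k] E.Ω) ⊗[k] (D.Ω ⊗[k] E.Ω) →ₗ[k] D.Ω ⊗[k] E.Ω :=
  TensorProduct.map (LinearMap.mul' k D.Ω) (LinearMap.mul' k E.Ω) ∘ₗ
    (TensorProduct.assoc k D.Ω D.Ω (E.Ω ⊗[k] E.Ω)).symm.toLinearMap ∘ₗ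
    LinearMap.lTensor D.Ω (TensorProduct.assoc k D.Ω E.Ω E.Ω).toLinearMap ∘ₗ
    LinearMap.lTensor D.Ω (LinearMap.rTensor E.Ω (koszulFlip E D)) ∘ₗ
    LinearMap.lTensor D.Ω (TensorProduct.assoc k E.Ω D.Ω E.Ω).symm.toLinearMap ∘ₗ
    (TensorProduct.assoc k D.Ω E.Ω (D.Ω ⊗[k] E.Ω)).toLinearMap

/-- The differential of the graded tensor product:
`d⊗(x ⊗ y) = dx ⊗ y + (-1)^{|x|} x ⊗ dy`. -/
def dT (D E : GDA k) : D.Ω ⊗[k] E.Ω →ₗ[k] D.Ω ⊗[k] E.Ω :=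
  LinearMap.rTensor E.Ω D.d + TensorProduct.map D.J E.d

/-- Projection of a differential calculus onto its degree-zero part `A`. -/
def DC.p0 {A : Type} [Ring A] [Algebra k A] (D : DC k A) : D.Ω →ₗ[k] A :=
  (LinearEquiv.ofInjective D.ι.toLinearMap D.ι_inj).symm.toLinearMap ∘ₗ
    (LinearEquiv.ofEq _ _ D.gr_zero).toLinearMap ∘ₗ
    DirectSum.component k ℕ (fun n => D.gr n) 0 ∘ₗ
    (DirectSum.decomposeLinearEquiv D.gr).toLinearMap


variable (k)

/-! ### First order differential calculi -/

/-- A first order differential calculus `(Ω¹(A), d)` on `A`, realized on the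
`A`-bimodule `V`. -/
structure FODC (A V : Type) [Ring A] [Algebra k A] [AddCommGroup V] [Module k V] where
  lact : A →ₗ[k] V →ₗ[k] V
  ract : A →ₗ[k] V →ₗ[k] V
  lact_one : lact 1 = LinearMap.id
  lact_mul : ∀ a b : A, lact (a * b) = lact a ∘ₗ lact b
  ract_one : ract 1 = LinearMap.id
  ract_mul : ∀ a b : A, ract (a * b) = ract b ∘ₗ ract a
  lr_comm : ∀ (a b : A) (v : V), lact a (ract b v) = ract b (lact a v)
  d : A →ₗ[k] V
  leibniz : ∀ a b : A, d (a * b) = lact a (d b) + ract b (d a)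
  span_eq : Submodule.span k {x : V | ∃ a b : A, x = lact a (d b)} = ⊤

/-- Auxiliary action of `A ⊗ H` on `V ⊗ H`:
`(a ⊗ h) ⋅ (v ⊗ g) = (act a v) ⊗ (mulH h g)`. -/
def actT {A H V : Type} [AddCommGroup A] [Module k A] [AddCommGroup H] [Module k H]
    [AddCommGroup V] [Module k V]
    (act : A →ₗ[k] V →ₗ[k] V) (mulH : H →ₗ[k] H →ₗ[k] H) :
    A ⊗[k] H →ₗ[k] (V ⊗[k] H) →ₗ[k] V ⊗[k] H :=
  TensorProduct.lift ((TensorProduct.mapBilinear (σ₁₂ := RingHom.id k) (M := V) (N := H) (M₂ := V) (N₂ := H)).compl₁₂ act mulH)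

/-- Auxiliary action of `H ⊗ A` on `H ⊗ V`:
`(h ⊗ a) ⋅ (g ⊗ v) = (mulH h g) ⊗ (act a v)`. -/
def actTL {A H V : Type} [AddCommGroup A] [Module k A] [AddCommGroup H] [Module k H]
    [AddCommGroup V] [Module k V]
    (act : A →ₗ[k] V →ₗ[k] V) (mulH : H →ₗ[k] H →ₗ[k] H) :
    H ⊗[k] A →ₗ[k] (H ⊗[k] V) →ₗ[k] H ⊗[k] V :=
  TensorProduct.lift ((TensorProduct.mapBilinear (σ₁₂ := RingHom.id k) (M := H) (N := V) (M₂ := H) (N₂ := V)).compl₁₂ mulH act)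

section Covariant
variable {H A : Type} [Ring H] [Bialgebra k H] [Ring A] [Algebra k A]

/-- A right `H`-covariant FODC on the right `H`-comodule algebra `A`. -/
structure RCovFODC (c : ComodAlg k H A) (V : Type) [AddCommGroup V] [Module k V]
    extends FODC k A V where
  ρV : V →ₗ[k] V ⊗[k] H
  ρV_counit : ∀ v, TensorProduct.rid k V
    (LinearMap.lTensor V (Coalgebra.counit (R := k) (A := H)) (ρV v)) = v
  ρV_coassoc : ∀ v, TensorProduct.assoc k V H H (LinearMap.rTensor H ρV (ρV v))
    = LinearMap.lTensor V (Coalgebra.comul (R := k) (A := H)) (ρV v)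
  ρV_d : ∀ a : A, ρV (d a) = LinearMap.rTensor H d (c.ρ a)
  ρV_l : ∀ (a : A) (v : V),
    ρV (lact a v) = actT k lact (LinearMap.mul k H) (c.ρ a) (ρV v)
  ρV_r : ∀ (a : A) (v : V),
    ρV (ract a v) = actT k ract ((LinearMap.mul k H).flip) (c.ρ a) (ρV v)

/-- A left `H`-covariant FODC on the Hopf algebra `H` itself. -/
structure LCovFODC (V : Type) [AddCommGroup V] [Module k V]
    extends FODC k H V where
  lam : V →ₗ[k] H ⊗[k] V
  lam_counit : ∀ v, TensorProduct.lid k V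
    (LinearMap.rTensor V (Coalgebra.counit (R := k) (A := H)) (lam v)) = v
  lam_coassoc : ∀ v, (TensorProduct.assoc k H H V).symm
      (LinearMap.lTensor H lam (lam v))
    = LinearMap.rTensor V (Coalgebra.comul (R := k) (A := H)) (lam v)
  lam_d : ∀ h : H, lam (d h) = LinearMap.lTensor H d (Coalgebra.comul (R := k) h)
  lam_l : ∀ (h : H) (v : V), lam (lact h v)
    = actTL k lact (LinearMap.mul k H) (Coalgebra.comul (R := k) h) (lam v)
  lam_r : ∀ (h : H) (v : V), lam (ract h v)
    = actTL k ract ((LinearMap.mul k H).flip) (Coalgebra.comul (R := k) h) (lam v)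

/-- The right coaction data making a left covariant FODC on `H` bicovariant. -/
structure BicovStruct {V : Type} [AddCommGroup V] [Module k V]
    (L : LCovFODC k (H := H) V) where
  ρV : V →ₗ[k] V ⊗[k] H
  ρV_counit : ∀ v, TensorProduct.rid k V
    (LinearMap.lTensor V (Coalgebra.counit (R := k) (A := H)) (ρV v)) = v
  ρV_coassoc : ∀ v, TensorProduct.assoc k V H H (LinearMap.rTensor H ρV (ρV v))
    = LinearMap.lTensor V (Coalgebra.comul (R := k) (A := H)) (ρV v)
  ρV_d : ∀ h : H, ρV (L.d h) = LinearMap.rTensor H L.d (Coalgebra.comul (R := k) h)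
  ρV_l : ∀ (h : H) (v : V),
    ρV (L.lact h v) = actT k L.lact (LinearMap.mul k H) (Coalgebra.comul (R := k) h) (ρV v)
  ρV_r : ∀ (h : H) (v : V),
    ρV (L.ract h v) = actT k L.ract ((LinearMap.mul k H).flip) (Coalgebra.comul (R := k) h) (ρV v)
  bicomod : ∀ v, LinearMap.lTensor H ρV (L.lam v)
    = TensorProduct.assoc k H V H (LinearMap.rTensor H L.lam (ρV v))

end Covariant

/-! ### Maximal prolongations -/

section MaxProl
variable {k}
variable {A : Type} [Ring A] [Algebra k A]

/-- A realization of a DC as an extension of a given FODC. -/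
structure ExtendsFODC {V : Type} [AddCommGroup V] [Module k V]
    (D : DC k A) (F : FODC k A V) where
  j : V →ₗ[k] D.Ω
  j_inj : Function.Injective j
  j_range : LinearMap.range j = D.gr 1
  j_d : ∀ a : A, j (F.d a) = D.d (D.ι a)
  j_l : ∀ (a : A) (v : V), j (F.lact a v) = D.ι a * j v
  j_r : ∀ (a : A) (v : V), j (F.ract a v) = j v * D.ι a

/-- `D` is the maximal prolongation of the FODC `F`: it extends `F` and every
other extension is a quotient of it. -/
def IsMaxProlongation {V : Type} [AddCommGroup V] [Module k V]
    (D : DC k A) (F : FODC k A V) : Prop :=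
  Nonempty (ExtendsFODC D F) ∧
  ∀ (D' : DC k A) (e : ExtendsFODC D F) (e' : ExtendsFODC D' F),
    ∃ φ : D.Ω →ₐ[k] D'.Ω, Function.Surjective φ ∧
      (∀ a : A, φ (D.ι a) = D'.ι a) ∧
      (∀ x, φ (D.d x) = D'.d (φ x)) ∧
      (∀ n, ∀ x ∈ D.gr n, φ x ∈ D'.gr n) ∧
      (∀ v : V, φ (e.j v) = e'.j v)

end MaxProl

/-! ### The adjoint coaction and graded Hopf calculi -/

section HopfSide
variable {k}
variable {H : Type} [Ring H] [HopfAlgebra k H]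

/-- The (right) adjoint coaction `Ad(h) = h₂ ⊗ S(h₁) h₃`. -/
def AdMap : H →ₗ[k] H ⊗[k] H :=
  LinearMap.lTensor H (LinearMap.mul' k H) ∘ₗ
    (TensorProduct.assoc k H H H).toLinearMap ∘ₗ
    LinearMap.rTensor H ((TensorProduct.comm k H H).toLinearMap ∘ₗ
      LinearMap.rTensor H (HopfAlgebra.antipode (R := k))) ∘ₗ
    LinearMap.rTensor H (Coalgebra.comul (R := k)) ∘ₗ
    Coalgebra.comul (R := k)

variable (k) in
/-- A differential calculus on `H` which is a differential graded Hopf algebra,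
as is the case for the maximal prolongation of a bicovariant FODC. -/
structure DGHopf extends DC k H where
  Δg : Ω →ₗ[k] Ω ⊗[k] Ω
  εg : Ω →ₗ[k] k
  Sg : Ω →ₗ[k] Ω
  Δg_one : Δg 1 = 1 ⊗ₜ[k] 1
  Δg_mul : ∀ x y : Ω, Δg (x * y) = gmulT toGDA toGDA (Δg x ⊗ₜ[k] Δg y)
  Δg_d : ∀ x : Ω, Δg (d x) = dT toGDA toGDA (Δg x)
  Δg_zero : ∀ h : H, Δg (ι h)
    = TensorProduct.map ι.toLinearMap ι.toLinearMap (Coalgebra.comul (R := k) h)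
  Δg_coassoc : ∀ x : Ω, TensorProduct.assoc k Ω Ω Ω (LinearMap.rTensor Ω Δg (Δg x))
    = LinearMap.lTensor Ω Δg (Δg x)
  Δg_counit_l : ∀ x : Ω, TensorProduct.lid k Ω (LinearMap.rTensor Ω εg (Δg x)) = x
  Δg_counit_r : ∀ x : Ω, TensorProduct.rid k Ω (LinearMap.lTensor Ω εg (Δg x)) = x
  εg_zero : ∀ h : H, εg (ι h) = Coalgebra.counit (R := k) h
  εg_pos : ∀ n, ∀ x ∈ gr (n + 1), εg x = 0
  Sg_antipode_l : ∀ x : Ω,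
    LinearMap.mul' k Ω (TensorProduct.map Sg LinearMap.id (Δg x)) = algebraMap k Ω (εg x)
  Sg_antipode_r : ∀ x : Ω,
    LinearMap.mul' k Ω (TensorProduct.map LinearMap.id Sg (Δg x)) = algebraMap k Ω (εg x)
  Sg_zero : ∀ h : H, Sg (ι h) = ι (HopfAlgebra.antipode (R := k) h)
  Sg_d : ∀ x : Ω, Sg (d x) = d (Sg x)
  Δg_grade : ∀ n, ∀ x ∈ gr n, Δg x ∈
    ⨆ p : {p : ℕ × ℕ // p.1 + p.2 = n},
      LinearMap.range (TensorProduct.map (gr p.1.1).subtype (gr p.1.2).subtype)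

namespace DGHopf

variable (D : DGHopf k (H := H))

/-- The left coaction of `H` on `Ω•(H)`, i.e. the degree `(0,•)` part of `Δg`. -/
def lamG : D.Ω →ₗ[k] H ⊗[k] D.Ω :=
  TensorProduct.map D.p0 LinearMap.id ∘ₗ D.Δg

/-- The left coinvariant forms `Λ• ⊆ Ω•(H)`. -/
def lamSub : Submodule k D.Ω :=
  LinearMap.ker (D.lamG - TensorProduct.mk k H D.Ω 1)

/-- The left coinvariant one-forms `Λ¹`. -/
def lam1 : Submodule k D.Ω := D.lamSub ⊓ D.gr 1

/-- The (quantum) Cartan–Maurer form `ϖ(h) = S(h₁) d(h₂)`, extended to `H`. -/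
def varpi : H →ₗ[k] D.Ω :=
  TensorProduct.lift
    (((LinearMap.mul k D.Ω ∘ₗ D.ι.toLinearMap ∘ₗ
        (HopfAlgebra.antipode (R := k))).compl₂ (D.d ∘ₗ D.ι.toLinearMap))) ∘ₗ
    Coalgebra.comul (R := k)

/-- The graded adjoint coaction
`Ad•(ω) = (-1)^{|ω₁||ω₂|} ω₂ ⊗ S•(ω₁) ∧ ω₃`. -/
def AdG : D.Ω →ₗ[k] D.Ω ⊗[k] D.Ω :=
  LinearMap.lTensor D.Ω (LinearMap.mul' k D.Ω ∘ₗ LinearMap.rTensor D.Ω D.Sg) ∘ₗ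
    (TensorProduct.assoc k D.Ω D.Ω D.Ω).toLinearMap ∘ₗ
    LinearMap.rTensor D.Ω (koszulFlip D.toGDA D.toGDA) ∘ₗ
    LinearMap.rTensor D.Ω D.Δg ∘ₗ D.Δg

end DGHopf
end HopfSide

/-! ### Complete calculi -/

section Complete
variable {k}
variable {H A : Type} [Ring H] [HopfAlgebra k H] [Ring A] [Algebra k A]

variable (k) in
/-- A complete calculus: the coaction of a comodule algebra extends to a
morphism of differential graded algebras `Ω•(A) → Ω•(A) ⊗ Ω•(H)`. -/
structure Complete (c : ComodAlg k H A) (DA : DC k A) (DH : DGHopf k (H := H)) where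
  Δc : DA.Ω →ₗ[k] DA.Ω ⊗[k] DH.Ω
  Δc_one : Δc 1 = 1 ⊗ₜ[k] 1
  Δc_mul : ∀ x y : DA.Ω, Δc (x * y) = gmulT DA.toGDA DH.toGDA (Δc x ⊗ₜ[k] Δc y)
  Δc_d : ∀ x : DA.Ω, Δc (DA.d x) = dT DA.toGDA DH.toGDA (Δc x)
  Δc_zero : ∀ a : A, Δc (DA.ι a)
    = TensorProduct.map DA.ι.toLinearMap DH.ι.toLinearMap (c.ρ a)
  Δc_grade : ∀ n, ∀ x ∈ DA.gr n, Δc x ∈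
    ⨆ p : {p : ℕ × ℕ // p.1 + p.2 = n},
      LinearMap.range (TensorProduct.map (DA.gr p.1.1).subtype (DH.gr p.1.2).subtype)

namespace Complete

variable {c : ComodAlg k H A} {DA : DC k A} {DH : DGHopf k (H := H)}
variable (E : Complete k c DA DH)

/-- The first order part of the extended coaction: a right `H`-coaction on `Ω•(A)`. -/
def ρΩ : DA.Ω →ₗ[k] DA.Ω ⊗[k] H :=
  LinearMap.lTensor DA.Ω DH.p0 ∘ₗ E.Δc

/-- The basic forms `Ω•(B) = Ω•(A)^{co Ω•(H)}`. -/
def basic : Submodule k DA.Ω :=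
  LinearMap.ker (E.Δc - (TensorProduct.mk k DA.Ω DH.Ω).flip 1)

/-- The horizontal forms `hor• = (Δ•)⁻¹(Ω•(A) ⊗ H)`. -/
def hor : Submodule k DA.Ω :=
  Submodule.comap E.Δc (LinearMap.range (LinearMap.lTensor DA.Ω DH.ι.toLinearMap))

end Complete

/-- The map `κ : a ⊗ ω ↦ a₀ ⊗ S(a₁) ω`. -/
def kappa (c : ComodAlg k H A) (DH : DGHopf k (H := H)) :
    A ⊗[k] DH.Ω →ₗ[k] A ⊗[k] DH.Ω :=
  LinearMap.lTensor A (LinearMap.mul' k DH.Ω ∘ₗ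
      LinearMap.rTensor DH.Ω (DH.ι.toLinearMap ∘ₗ HopfAlgebra.antipode (R := k))) ∘ₗ
    (TensorProduct.assoc k A H DH.Ω).toLinearMap ∘ₗ
    LinearMap.rTensor DH.Ω c.ρ

namespace Complete
variable {c : ComodAlg k H A} {DA : DC k A} {DH : DGHopf k (H := H)}
variable (E : Complete k c DA DH)

/-- The vertical projection `π_v : Ω•(A) → A ⊗ Λ• ⊆ A ⊗ Ω•(H)`. -/
def piv : DA.Ω →ₗ[k] A ⊗[k] DH.Ω :=
  kappa c DH ∘ₗ TensorProduct.map DA.p0 LinearMap.id ∘ₗ E.Δc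

end Complete
end Complete

/-! ### The Đurđević braiding via the Galois map -/

section Durd
variable {k}
variable {H A : Type} [Ring H] [HopfAlgebra k H] [Ring A] [Algebra k A]

/-- The map `a ⊗ c ↦ a₀ c ⊗ a₁`, i.e. `χ ∘ σ` for the Đurđević braiding. -/
def durdGalois (c : ComodAlg k H A) : A ⊗[k] A →ₗ[k] A ⊗[k] H :=
  LinearMap.rTensor H (LinearMap.mul' k A) ∘ₗ
    (TensorProduct.assoc k A A H).symm.toLinearMap ∘ₗ
    LinearMap.lTensor A (TensorProduct.comm k H A).toLinearMap ∘ₗ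
    (TensorProduct.assoc k A H A).toLinearMap ∘ₗ
    LinearMap.rTensor A c.ρ

/-- The graded analogue `ω ⊗ η ↦ (-1)^{|η||ω₁|} (ω₀ ∧ η) ⊗ ω₁`, i.e.
`χ• ∘ σ•` for the extended Đurđević braiding. -/
def durdGaloisG {c : ComodAlg k H A} {DA : DC k A} {DH : DGHopf k (H := H)}
    (E : Complete k c DA DH) : DA.Ω ⊗[k] DA.Ω →ₗ[k] DA.Ω ⊗[k] DH.Ω :=
  LinearMap.rTensor DH.Ω (LinearMap.mul' k DA.Ω) ∘ₗ
    (TensorProduct.assoc k DA.Ω DA.Ω DH.Ω).symm.toLinearMap ∘ₗ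
    LinearMap.lTensor DA.Ω (koszulFlip DH.toGDA DA.toGDA) ∘ₗ
    (TensorProduct.assoc k DA.Ω DH.Ω DA.Ω).toLinearMap ∘ₗ
    LinearMap.rTensor DA.Ω E.Δc

end Durd

/-! ### Gauge transformations and connections -/

section Gauge
variable {k}
variable {H A : Type} [Ring H] [HopfAlgebra k H] [Ring A] [Algebra k A]

/-- A gauge transformation: unital, convolution invertible, and colinear with
respect to the adjoint coaction. -/
def IsGauge (c : ComodAlg k H A) (f : H →ₗ[k] A) : Prop :=
  IsConvInvertible k f ∧ f 1 = 1 ∧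
    ∀ h : H, c.ρ (f h) = LinearMap.rTensor H f (AdMap h)

/-- A vertical automorphism: a unital left `B`-linear right `H`-colinear
bijection of `A`. -/
def IsVertAut (c : ComodAlg k H A) (F : A →ₗ[k] A) : Prop :=
  Function.Bijective F ∧ (∀ b ∈ c.coinv, ∀ a, F (b * a) = b * F a) ∧ F 1 = 1 ∧
    ∀ a, c.ρ (F a) = LinearMap.rTensor H F (c.ρ a)

variable {DA : DC k A} {DH : DGHopf k (H := H)}

/-- Convolution product with respect to the graded coproduct. -/
def convG (DH : DGHopf k (H := H)) {P : Type} [Ring P] [Algebra k P]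
    (f g : DH.Ω →ₗ[k] P) : DH.Ω →ₗ[k] P :=
  LinearMap.mul' k P ∘ₗ TensorProduct.map f g ∘ₗ DH.Δg

/-- Convolution unit with respect to the graded counit. -/
def convGUnit (DH : DGHopf k (H := H)) {P : Type} [Ring P] [Algebra k P] :
    DH.Ω →ₗ[k] P :=
  Algebra.linearMap k P ∘ₗ DH.εg

/-- A map `Ω•(H) → Ω•(A)` of degree zero. -/
def IsDeg0 (DH : DGHopf k (H := H)) (DA : DC k A) (f : DH.Ω →ₗ[k] DA.Ω) : Prop :=
  ∀ n, ∀ x ∈ DH.gr n, f x ∈ DA.gr n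

/-- The degree-zero component `f⁰ : H → A` of a degree-zero map. -/
def deg0Part (DH : DGHopf k (H := H)) (DA : DC k A) (f : DH.Ω →ₗ[k] DA.Ω) :
    H →ₗ[k] A :=
  DA.p0 ∘ₗ f ∘ₗ DH.ι.toLinearMap

section WithComplete
variable {c : ComodAlg k H A} (E : Complete k c DA DH)

/-- A graded gauge transformation. -/
def IsGradedGauge (f : DH.Ω →ₗ[k] DA.Ω) : Prop :=
  IsDeg0 DH DA f ∧
  (∃ g : DH.Ω →ₗ[k] DA.Ω, IsDeg0 DH DA g ∧
      convG DH f g = convGUnit DH ∧ convG DH g f = convGUnit DH) ∧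
  f 1 = 1 ∧
  ∀ ω, E.Δc (f ω) = LinearMap.rTensor DH.Ω f (DH.AdG ω)

/-- A graded vertical automorphism. -/
def IsGradedVertAut (F : DA.Ω →ₗ[k] DA.Ω) : Prop :=
  (∀ n, ∀ x ∈ DA.gr n, F x ∈ DA.gr n) ∧ Function.Bijective F ∧
  (∀ β ∈ E.basic, ∀ x, F (β * x) = β * F x) ∧ F 1 = 1 ∧
  ∀ x, E.Δc (F x) = LinearMap.rTensor DH.Ω F (E.Δc x)

/-- The right hand side `h ↦ s(ϖ(π_ε(h₂))) ⊗ S(h₁)h₃` of the colinearity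
condition for connection 1-forms. -/
def connRHSg (s : DH.Ω →ₗ[k] DA.Ω) : H →ₗ[k] DA.Ω ⊗[k] H :=
  TensorProduct.map (s ∘ₗ DH.varpi)
      (LinearMap.mul' k H ∘ₗ LinearMap.rTensor H (HopfAlgebra.antipode (R := k))) ∘ₗ
    (TensorProduct.assoc k H H H).toLinearMap ∘ₗ
    LinearMap.rTensor H (TensorProduct.comm k H H).toLinearMap ∘ₗ
    LinearMap.rTensor H (Coalgebra.comul (R := k)) ∘ₗ
    Coalgebra.comul (R := k)

/-- A connection 1-form on a quantum principal bundle with complete calculus. -/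
def IsConnForm (s : DH.Ω →ₗ[k] DA.Ω) : Prop :=
  (∀ θ ∈ DH.lam1, s θ ∈ DA.gr 1) ∧
  (∀ h : H, E.ρΩ (s (DH.varpi h)) = connRHSg s h) ∧
  (∀ θ ∈ DH.lam1, E.piv (s θ) = (1 : A) ⊗ₜ[k] θ)

/-- The curvature `R_s(h) = d s(ϖ(h)) + s(ϖ(π_ε(h₁))) ∧ s(ϖ(π_ε(h₂)))`. -/
def curvature (s : DH.Ω →ₗ[k] DA.Ω) : H →ₗ[k] DA.Ω :=
  DA.d ∘ₗ s ∘ₗ DH.varpi +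
    LinearMap.mul' k DA.Ω ∘ₗ
      TensorProduct.map (s ∘ₗ DH.varpi) (s ∘ₗ DH.varpi) ∘ₗ Coalgebra.comul (R := k)

/-- The `Ω•(B)`-balancing relations in `Ω•(A) ⊗ Ω•(A)`. -/
def basicBalancer : Submodule k (DA.Ω ⊗[k] DA.Ω) :=
  balQ k (E.basic : Set DA.Ω)

/-- The graded Galois map `χ• : ω ⊗ η ↦ ω ∧ η₍₀₎ ⊗ η₍₁₎` before descending to
`Ω•(A) ⊗_{Ω•(B)} Ω•(A)`. -/
def chi0g : DA.Ω ⊗[k] DA.Ω →ₗ[k] DA.Ω ⊗[k] DH.Ω :=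
  gmulT DA.toGDA DH.toGDA ∘ₗ
    TensorProduct.map ((TensorProduct.mk k DA.Ω DH.Ω).flip 1) E.Δc

end WithComplete
end Gauge

/-! ### First-order machinery -/

section FirstOrder
variable {k}
variable {H A : Type} [Ring H] [HopfAlgebra k H] [Ring A] [Algebra k A]
variable {VA VH : Type} [AddCommGroup VA] [Module k VA] [AddCommGroup VH] [Module k VH]
variable {c : ComodAlg k H A}

/-- The left coinvariant elements `Λ¹` of a left covariant FODC on `H`. -/
def Lam1 (L : LCovFODC k (H := H) VH) : Submodule k VH :=
  LinearMap.ker (L.lam - TensorProduct.mk k H VH 1)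

/-- The Cartan–Maurer form `ϖ(h) = S(h₁) ⋅ d(h₂)` of a left covariant FODC. -/
def varpi1 (L : LCovFODC k (H := H) VH) : H →ₗ[k] VH :=
  TensorProduct.lift
    ((L.lact ∘ₗ HopfAlgebra.antipode (R := k)).compl₂ L.d) ∘ₗ
    Coalgebra.comul (R := k)

/-- The map `a' ↦ a'₀ ⊗ S(a'₁) ⋅ d(a'₂)`. -/
def nuMap (c : ComodAlg k H A) (L : LCovFODC k (H := H) VH) : A →ₗ[k] A ⊗[k] VH :=
  LinearMap.lTensor A
      (TensorProduct.lift ((L.lact ∘ₗ HopfAlgebra.antipode (R := k)).compl₂ L.d)) ∘ₗ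
    (TensorProduct.assoc k A H H).toLinearMap ∘ₗ
    LinearMap.rTensor H c.ρ ∘ₗ c.ρ

/-- A first order complete calculus: the vertical projection
`π_v(a ⋅ d a') = a a'₀ ⊗ S(a'₁) d a'₂` is well defined. -/
structure FOComplete (c : ComodAlg k H A) (FA : RCovFODC k c VA)
    (LH : LCovFODC k (H := H) VH) where
  pv : VA →ₗ[k] A ⊗[k] VH
  pv_eq : ∀ a a' : A, pv (FA.lact a (FA.d a'))
    = LinearMap.rTensor VH (LinearMap.mulLeft k a) (nuMap c LH a')

/-- Colinearity right hand side for first-order connection forms. -/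
def connRHS1 (LH : LCovFODC k (H := H) VH) (_FA : RCovFODC k c VA)
    (s : VH →ₗ[k] VA) : H →ₗ[k] VA ⊗[k] H :=
  TensorProduct.map (s ∘ₗ varpi1 LH)
      (LinearMap.mul' k H ∘ₗ LinearMap.rTensor H (HopfAlgebra.antipode (R := k))) ∘ₗ
    (TensorProduct.assoc k H H H).toLinearMap ∘ₗ
    LinearMap.rTensor H (TensorProduct.comm k H H).toLinearMap ∘ₗ
    LinearMap.rTensor H (Coalgebra.comul (R := k)) ∘ₗ
    Coalgebra.comul (R := k)

/-- A connection 1-form for a first order complete calculus. -/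
def IsConnForm1 {c : ComodAlg k H A} (FA : RCovFODC k c VA)
    (LH : LCovFODC k (H := H) VH) (E : FOComplete c FA LH)
    (s : VH →ₗ[k] VA) : Prop :=
  (∀ h : H, FA.ρV (s (varpi1 LH h)) = connRHS1 LH FA s h) ∧
  (∀ θ ∈ Lam1 LH, E.pv (s θ) = (1 : A) ⊗ₜ[k] θ)

end FirstOrder

/-! ### The regular comodule algebra and bicovariant prolongations -/

section Reg
variable {k}
variable (H : Type) [Ring H] [HopfAlgebra k H]

variable (k) in
/-- `H` as a right comodule algebra over itself via the comultiplication. -/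
def regCA : ComodAlg k H H where
  ρ := Coalgebra.comul
  ρ_one := Bialgebra.comul_one
  ρ_mul := fun a b => Bialgebra.comul_mul a b
  counit_ρ := by
    intro a
    have h := LinearMap.congr_fun
      (Coalgebra.lTensor_counit_comp_comul (R := k) (A := H)) a
    simp only [LinearMap.comp_apply] at h
    rw [h]
    simp
  coassoc_ρ := by
    intro a
    have h := LinearMap.congr_fun (Coalgebra.coassoc (R := k) (A := H)) a
    simp only [LinearMap.comp_apply, LinearEquiv.coe_coe] at h
    exact h

variable {H} in
/-- `D` is the maximal prolongation of some bicovariant FODC on `H`. -/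
def DGHopf.IsMaxProlOfBicov (D : DGHopf k (H := H)) : Prop :=
  ∃ (V : Type) (_ : AddCommGroup V) (_ : Module k V) (L : LCovFODC k (H := H) V),
    Nonempty (BicovStruct k L) ∧ IsMaxProlongation D.toDC L.toFODC

end Reg

/-! ## The noncommutative algebraic 2-torus -/

/-- The quantum principal bundle of the noncommutative algebraic 2-torus
`A = O_θ(T²) = ℂ[u,v,u⁻¹,v⁻¹]/⟨vu - e^{iθ}uv⟩` over `H = O(U(1)) = ℂ[t,t⁻¹]`,
together with its first order complete differential calculus
`Ω¹(A) = span_A{du, dv}`, `Ω¹(H) = span_H{dt}`. -/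
structure TorusBundle where
  H : Type
  [ringH : CommRing H]
  [hopfH : HopfAlgebra ℂ H]
  A : Type
  [ringA : Ring A]
  [algA : Algebra ℂ A]
  θ : ℝ
  θ_ne : θ ≠ 0
  u : A
  v : A
  u' : A
  v' : A
  uu' : u * u' = 1
  u'u : u' * u = 1
  vv' : v * v' = 1
  v'v : v' * v = 1
  rel : v * u = Complex.exp (θ * Complex.I) • (u * v)
  basisA : Module.Basis (ℤ × ℤ) ℂ A
  basisA_eq : ∀ m n : ℤ, basisA (m, n)
    = (((⟨u, u', uu', u'u⟩ : Aˣ) ^ m : Aˣ) : A) * (((⟨v, v', vv', v'v⟩ : Aˣ) ^ n : Aˣ) : A)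
  t : Hˣ
  grouplike_t : Coalgebra.comul (R := ℂ) ((t : Hˣ) : H) = ((t : Hˣ) : H) ⊗ₜ[ℂ] ((t : Hˣ) : H)
  counit_t : Coalgebra.counit (R := ℂ) ((t : Hˣ) : H) = 1
  basisH : Module.Basis ℤ ℂ H
  basisH_eq : ∀ m : ℤ, basisH m = ((t ^ m : Hˣ) : H)
  ca : ComodAlg ℂ H A
  ρu : ca.ρ u = u ⊗ₜ[ℂ] ((t : Hˣ) : H)
  ρv : ca.ρ v = v ⊗ₜ[ℂ] ((t⁻¹ : Hˣ) : H)
  galois : Function.Bijective (chiQ ℂ ca)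
  ff : IsFaithfullyFlatOver ℂ ca.coinv
  V1 : Type
  [acgV1 : AddCommGroup V1]
  [modV1 : Module ℂ V1]
  FA : RCovFODC ℂ ca V1
  free1 : ∀ x : V1, ∃! p : A × A, x = FA.lact p.1 (FA.d u) + FA.lact p.2 (FA.d v)
  comm_du_v : FA.ract v (FA.d u) = Complex.exp (-(θ * Complex.I)) • FA.lact v (FA.d u)
  comm_dv_u : FA.ract u (FA.d v) = Complex.exp (θ * Complex.I) • FA.lact u (FA.d v)
  comm_du_u : FA.ract u (FA.d u) = FA.lact u (FA.d u)
  comm_dv_v : FA.ract v (FA.d v) = FA.lact v (FA.d v)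
  VH : Type
  [acgVH : AddCommGroup VH]
  [modVH : Module ℂ VH]
  LH : LCovFODC ℂ (H := H) VH
  bic : BicovStruct ℂ LH
  freeH : ∀ x : VH, ∃! q : H, x = LH.lact q (LH.d ((t : Hˣ) : H))
  lam1_span : Lam1 LH = Submodule.span ℂ {varpi1 LH ((t : Hˣ) : H)}
  FO : FOComplete ca FA LH

attribute [instance] TorusBundle.ringH TorusBundle.hopfH TorusBundle.ringA
  TorusBundle.algA TorusBundle.acgV1 TorusBundle.modV1 TorusBundle.acgVH
  TorusBundle.modVH

/-! ### Auxiliary machinery for the torus classification -/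

section TorusAux

lemma fodc_d_one {k : Type} [Field k] {A V : Type} [Ring A] [Algebra k A]
    [AddCommGroup V] [Module k V] (F : FODC k A V) : F.d 1 = 0 := by
  have h := F.leibniz 1 1
  rw [one_mul, F.lact_one, F.ract_one, LinearMap.id_apply] at h
  exact (left_eq_add.mp h)

variable (T : TorusBundle)

/-- The pair of coefficients of an element of `Ω¹(A)` in the basis `du, dv`. -/
noncomputable def psiPair (x : T.V1) : T.A × T.A := (T.free1 x).exists.choose

lemma psiPair_spec (x : T.V1) :
    x = T.FA.lact (psiPair T x).1 (T.FA.d T.u) + T.FA.lact (psiPair T x).2 (T.FA.d T.v) :=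
  (T.free1 x).exists.choose_spec

lemma psiPair_eq (x : T.V1) (p : T.A × T.A)
    (h : x = T.FA.lact p.1 (T.FA.d T.u) + T.FA.lact p.2 (T.FA.d T.v)) :
    psiPair T x = p :=
  (T.free1 x).unique (psiPair_spec T x) h

/-- The `dv`-coefficient, as a linear map. -/
noncomputable def Psi : T.V1 →ₗ[ℂ] T.A where
  toFun x := (psiPair T x).2
  map_add' x y := by
    have h : psiPair T (x + y) = ((psiPair T x).1 + (psiPair T y).1,
        (psiPair T x).2 + (psiPair T y).2) := by
      apply psiPair_eq
      conv_lhs => rw [psiPair_spec T x, psiPair_spec T y]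
      simp only [map_add, LinearMap.add_apply]
      abel
    rw [h]
  map_smul' c x := by
    have h : psiPair T (c • x) = (c • (psiPair T x).1, c • (psiPair T x).2) := by
      apply psiPair_eq
      conv_lhs => rw [psiPair_spec T x]
      simp only [map_smul, LinearMap.smul_apply, smul_add]
    rw [h]
    rfl

lemma Psi_lact_du (a : T.A) : Psi T (T.FA.lact a (T.FA.d T.u)) = 0 := by
  have h : psiPair T (T.FA.lact a (T.FA.d T.u)) = (a, (0 : T.A)) := by
    apply psiPair_eq
    simp only [map_zero, LinearMap.zero_apply, add_zero]
  show (psiPair T (T.FA.lact a (T.FA.d T.u))).2 = 0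
  rw [h]

lemma Psi_lact_dv (a : T.A) : Psi T (T.FA.lact a (T.FA.d T.v)) = a := by
  have h : psiPair T (T.FA.lact a (T.FA.d T.v)) = ((0 : T.A), a) := by
    apply psiPair_eq
    simp only [map_zero, LinearMap.zero_apply, zero_add]
  show (psiPair T (T.FA.lact a (T.FA.d T.v))).2 = a
  rw [h]

/-- The coefficient of an element of `Ω¹(H)` in the basis `dt`. -/
noncomputable def thetaFun (x : T.VH) : T.H := (T.freeH x).exists.choose

lemma thetaFun_spec (x : T.VH) :
    x = T.LH.lact (thetaFun T x) (T.LH.d ((T.t : T.Hˣ) : T.H)) :=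
  (T.freeH x).exists.choose_spec

lemma thetaFun_eq (x : T.VH) (h : T.H)
    (hh : x = T.LH.lact h (T.LH.d ((T.t : T.Hˣ) : T.H))) : thetaFun T x = h :=
  (T.freeH x).unique (thetaFun_spec T x) hh

noncomputable def Theta : T.VH →ₗ[ℂ] T.H where
  toFun x := thetaFun T x
  map_add' x y := by
    apply thetaFun_eq
    conv_lhs => rw [thetaFun_spec T x, thetaFun_spec T y]
    simp only [map_add, LinearMap.add_apply]
  map_smul' c x := by
    apply thetaFun_eq
    conv_lhs => rw [thetaFun_spec T x]
    simp only [map_smul, LinearMap.smul_apply, RingHom.id_apply]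

lemma Theta_lact (h : T.H) :
    Theta T (T.LH.lact h (T.LH.d ((T.t : T.Hˣ) : T.H))) = h :=
  thetaFun_eq T _ h rfl

/-! Group-like computations for `t`. -/

lemma counit_tH' : Coalgebra.counit (R := ℂ) ((T.t⁻¹ : T.Hˣ) : T.H) = 1 := by
  have h : Coalgebra.counit (R := ℂ) (((T.t : T.Hˣ) : T.H) * ((T.t⁻¹ : T.Hˣ) : T.H)) = 1 := by
    rw [Units.mul_inv, Bialgebra.counit_one]
  rw [Bialgebra.counit_mul, T.counit_t, one_mul] at h
  exact h

lemma comul_tH' : Coalgebra.comul (R := ℂ) ((T.t⁻¹ : T.Hˣ) : T.H)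
    = ((T.t⁻¹ : T.Hˣ) : T.H) ⊗ₜ[ℂ] ((T.t⁻¹ : T.Hˣ) : T.H) := by
  have h1 : Coalgebra.comul (R := ℂ) (((T.t : T.Hˣ) : T.H))
      * Coalgebra.comul (R := ℂ) ((T.t⁻¹ : T.Hˣ) : T.H) = 1 := by
    rw [← Bialgebra.comul_mul, Units.mul_inv, Bialgebra.comul_one]
  have h2 : (((T.t⁻¹ : T.Hˣ) : T.H) ⊗ₜ[ℂ] ((T.t⁻¹ : T.Hˣ) : T.H))
      * Coalgebra.comul (R := ℂ) (((T.t : T.Hˣ) : T.H)) = 1 := by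
    rw [T.grouplike_t, Algebra.TensorProduct.tmul_mul_tmul, Units.inv_mul,
      Algebra.TensorProduct.one_def]
  calc Coalgebra.comul (R := ℂ) ((T.t⁻¹ : T.Hˣ) : T.H)
      = ((((T.t⁻¹ : T.Hˣ) : T.H) ⊗ₜ[ℂ] ((T.t⁻¹ : T.Hˣ) : T.H))
          * Coalgebra.comul (R := ℂ) (((T.t : T.Hˣ) : T.H)))
          * Coalgebra.comul (R := ℂ) ((T.t⁻¹ : T.Hˣ) : T.H) := by rw [h2, one_mul]
    _ = (((T.t⁻¹ : T.Hˣ) : T.H) ⊗ₜ[ℂ] ((T.t⁻¹ : T.Hˣ) : T.H))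
          * (Coalgebra.comul (R := ℂ) (((T.t : T.Hˣ) : T.H))
          * Coalgebra.comul (R := ℂ) ((T.t⁻¹ : T.Hˣ) : T.H)) := by rw [mul_assoc]
    _ = ((T.t⁻¹ : T.Hˣ) : T.H) ⊗ₜ[ℂ] ((T.t⁻¹ : T.Hˣ) : T.H) := by rw [h1, mul_one]

lemma antipode_tH : HopfAlgebra.antipode (R := ℂ) ((T.t : T.Hˣ) : T.H)
    = ((T.t⁻¹ : T.Hˣ) : T.H) := by
  have h := HopfAlgebra.mul_antipode_rTensor_comul_apply (R := ℂ) ((T.t : T.Hˣ) : T.H)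
  rw [T.grouplike_t, T.counit_t, map_one] at h
  simp only [LinearMap.rTensor_tmul, LinearMap.mul'_apply] at h
  calc HopfAlgebra.antipode (R := ℂ) ((T.t : T.Hˣ) : T.H)
      = HopfAlgebra.antipode (R := ℂ) ((T.t : T.Hˣ) : T.H)
        * (((T.t : T.Hˣ) : T.H) * ((T.t⁻¹ : T.Hˣ) : T.H)) := by rw [Units.mul_inv, mul_one]
    _ = (HopfAlgebra.antipode (R := ℂ) ((T.t : T.Hˣ) : T.H)
        * ((T.t : T.Hˣ) : T.H)) * ((T.t⁻¹ : T.Hˣ) : T.H) := by rw [mul_assoc]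
    _ = ((T.t⁻¹ : T.Hˣ) : T.H) := by rw [h, one_mul]

lemma antipode_tH' : HopfAlgebra.antipode (R := ℂ) ((T.t⁻¹ : T.Hˣ) : T.H)
    = ((T.t : T.Hˣ) : T.H) := by
  have h := HopfAlgebra.mul_antipode_rTensor_comul_apply (R := ℂ) ((T.t⁻¹ : T.Hˣ) : T.H)
  rw [comul_tH', counit_tH', map_one] at h
  simp only [LinearMap.rTensor_tmul, LinearMap.mul'_apply] at h
  calc HopfAlgebra.antipode (R := ℂ) ((T.t⁻¹ : T.Hˣ) : T.H)
      = HopfAlgebra.antipode (R := ℂ) ((T.t⁻¹ : T.Hˣ) : T.H)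
        * (((T.t⁻¹ : T.Hˣ) : T.H) * ((T.t : T.Hˣ) : T.H)) := by rw [Units.inv_mul, mul_one]
    _ = (HopfAlgebra.antipode (R := ℂ) ((T.t⁻¹ : T.Hˣ) : T.H)
        * ((T.t⁻¹ : T.Hˣ) : T.H)) * ((T.t : T.Hˣ) : T.H) := by rw [mul_assoc]
    _ = ((T.t : T.Hˣ) : T.H) := by rw [h, one_mul]

lemma varpi_tH : varpi1 T.LH ((T.t : T.Hˣ) : T.H)
    = T.LH.lact ((T.t⁻¹ : T.Hˣ) : T.H) (T.LH.d ((T.t : T.Hˣ) : T.H)) := by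
  simp only [varpi1, LinearMap.comp_apply, T.grouplike_t, TensorProduct.lift.tmul,
    LinearMap.compl₂_apply, antipode_tH T]

/-! `nuMap` computations. -/

lemma nuMap_u : nuMap T.ca T.LH T.u
    = T.u ⊗ₜ[ℂ] (T.LH.lact ((T.t⁻¹ : T.Hˣ) : T.H) (T.LH.d ((T.t : T.Hˣ) : T.H))) := by
  simp only [nuMap, LinearMap.comp_apply, T.ρu, LinearMap.rTensor_tmul,
    LinearEquiv.coe_coe, TensorProduct.assoc_tmul, LinearMap.lTensor_tmul,
    TensorProduct.lift.tmul, LinearMap.compl₂_apply, antipode_tH T]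

lemma nuMap_v : nuMap T.ca T.LH T.v
    = T.v ⊗ₜ[ℂ] (T.LH.lact ((T.t : T.Hˣ) : T.H) (T.LH.d ((T.t⁻¹ : T.Hˣ) : T.H))) := by
  simp only [nuMap, LinearMap.comp_apply, T.ρv, LinearMap.rTensor_tmul,
    LinearEquiv.coe_coe, TensorProduct.assoc_tmul, LinearMap.lTensor_tmul,
    TensorProduct.lift.tmul, LinearMap.compl₂_apply, antipode_tH' T]

lemma ρ_uv : T.ca.ρ (T.u * T.v) = (T.u * T.v) ⊗ₜ[ℂ] (1 : T.H) := by
  rw [T.ca.ρ_mul, T.ρu, T.ρv, Algebra.TensorProduct.tmul_mul_tmul, Units.mul_inv]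

lemma nuMap_uv : nuMap T.ca T.LH (T.u * T.v) = 0 := by
  simp only [nuMap, LinearMap.comp_apply, ρ_uv T, LinearMap.rTensor_tmul,
    LinearEquiv.coe_coe, TensorProduct.assoc_tmul, LinearMap.lTensor_tmul,
    TensorProduct.lift.tmul, LinearMap.compl₂_apply, fodc_d_one T.LH.toFODC,
    map_zero, TensorProduct.tmul_zero]

/-! `pv` computations. -/

lemma pv_lact_du (a : T.A) : T.FO.pv (T.FA.lact a (T.FA.d T.u))
    = (a * T.u) ⊗ₜ[ℂ] (T.LH.lact ((T.t⁻¹ : T.Hˣ) : T.H) (T.LH.d ((T.t : T.Hˣ) : T.H))) := by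
  rw [T.FO.pv_eq a T.u, nuMap_u, LinearMap.rTensor_tmul, LinearMap.mulLeft_apply]

lemma pv_lact_dv (a : T.A) : T.FO.pv (T.FA.lact a (T.FA.d T.v))
    = (a * T.v) ⊗ₜ[ℂ] (T.LH.lact ((T.t : T.Hˣ) : T.H) (T.LH.d ((T.t⁻¹ : T.Hˣ) : T.H))) := by
  rw [T.FO.pv_eq a T.v, nuMap_v, LinearMap.rTensor_tmul, LinearMap.mulLeft_apply]

lemma exp_neg_mul_exp : Complex.exp (-(↑T.θ * Complex.I)) * Complex.exp (↑T.θ * Complex.I) = 1 := by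
  rw [← Complex.exp_add, neg_add_cancel, Complex.exp_zero]

lemma xi_eq : T.LH.lact ((T.t : T.Hˣ) : T.H) (T.LH.d ((T.t⁻¹ : T.Hˣ) : T.H))
    = - T.LH.lact ((T.t⁻¹ : T.Hˣ) : T.H) (T.LH.d ((T.t : T.Hˣ) : T.H)) := by
  have h0 : T.FO.pv (T.FA.d (T.u * T.v)) = 0 := by
    have h := T.FO.pv_eq 1 (T.u * T.v)
    rw [T.FA.lact_one, LinearMap.id_apply] at h
    rw [h, nuMap_uv, map_zero]
  have h1 := T.FA.leibniz T.u T.v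
  rw [T.comm_du_v] at h1
  have h2 := congrArg T.FO.pv h1
  rw [h0, map_add, map_smul, pv_lact_du, pv_lact_dv, T.rel, smul_tmul', smul_smul,
    exp_neg_mul_exp, one_smul, ← TensorProduct.tmul_add] at h2
  have h4 := congrArg (fun z => (TensorProduct.lid ℂ T.VH)
      ((LinearMap.rTensor T.VH (T.basisA.coord (1,1))) z)) h2
  have huv : T.u * T.v = T.basisA (1,1) := by
    rw [T.basisA_eq 1 1, zpow_one, zpow_one]
  rw [huv] at h4
  simp only [map_zero, LinearMap.rTensor_tmul, TensorProduct.lid_tmul,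
    Module.Basis.coord_apply, Module.Basis.repr_self, Finsupp.single_eq_same, one_smul] at h4
  exact eq_neg_of_add_eq_zero_left h4.symm

lemma tensor_varpi_eq_zero {a : T.A}
    (h : a ⊗ₜ[ℂ] (T.LH.lact ((T.t⁻¹ : T.Hˣ) : T.H) (T.LH.d ((T.t : T.Hˣ) : T.H)))
      = (0 : T.A ⊗[ℂ] T.VH)) : a = 0 := by
  have h2 := congrArg (fun z => (TensorProduct.rid ℂ T.A)
      ((LinearMap.lTensor T.A ((T.basisH.coord (-1)) ∘ₗ Theta T)) z)) h
  simp only [map_zero, LinearMap.lTensor_tmul, LinearMap.comp_apply, Theta_lact,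
    TensorProduct.rid_tmul] at h2
  have hb : ((T.t⁻¹ : T.Hˣ) : T.H) = T.basisH (-1) := by
    rw [T.basisH_eq (-1), zpow_neg_one]
  rw [hb, Module.Basis.coord_apply, Module.Basis.repr_self, Finsupp.single_eq_same, one_smul] at h2
  exact h2

/-! `actT` computations for the colinearity argument. -/

lemma rTensor_Psi_actT_du (y : T.A ⊗[ℂ] T.H) :
    LinearMap.rTensor T.H (Psi T) (actT ℂ T.FA.lact (LinearMap.mul ℂ T.H) y
      ((T.FA.d T.u) ⊗ₜ[ℂ] ((T.t : T.Hˣ) : T.H))) = 0 := by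
  induction y using TensorProduct.induction_on with
  | zero => simp [LinearMap.map_zero₂]
  | tmul a h =>
      simp only [actT, TensorProduct.lift.tmul, LinearMap.compl₁₂_apply,
        TensorProduct.mapBilinear_apply, TensorProduct.map_tmul, LinearMap.mul_apply',
        LinearMap.rTensor_tmul, Psi_lact_du, TensorProduct.zero_tmul]
  | add x y hx hy =>
      rw [LinearMap.map_add₂, LinearMap.map_add, hx, hy, add_zero]

lemma rTensor_Psi_actT_dv (y : T.A ⊗[ℂ] T.H) :
    LinearMap.rTensor T.H (Psi T) (actT ℂ T.FA.lact (LinearMap.mul ℂ T.H) y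
      ((T.FA.d T.v) ⊗ₜ[ℂ] ((T.t⁻¹ : T.Hˣ) : T.H)))
    = y * ((1 : T.A) ⊗ₜ[ℂ] ((T.t⁻¹ : T.Hˣ) : T.H)) := by
  induction y using TensorProduct.induction_on with
  | zero => simp [LinearMap.map_zero₂]
  | tmul a h =>
      simp only [actT, TensorProduct.lift.tmul, LinearMap.compl₁₂_apply,
        TensorProduct.mapBilinear_apply, TensorProduct.map_tmul, LinearMap.mul_apply',
        LinearMap.rTensor_tmul, Psi_lact_dv, Algebra.TensorProduct.tmul_mul_tmul, mul_one]
  | add x y hx hy =>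
      rw [LinearMap.map_add₂, LinearMap.map_add, hx, hy, add_mul]

end TorusAux

/-! ## Statement 18: classification of connections on the noncommutative 2-torus -/

/-- Every connection 1-form on the noncommutative algebraic 2-torus is a convex
combination of the connection 1-forms `t⁻¹dt ↦ u⁻¹du + b db'` and
`t⁻¹dt ↦ v⁻¹dv + b db'` with `b, b' ∈ B`. -/
theorem torus_connections_classification (T : TorusBundle) :
    ∀ s : T.VH →ₗ[ℂ] T.V1, IsConnForm1 T.FA T.LH T.FO s →
      ∃ (c : ℂ) (b b' e e' : T.A), b ∈ T.ca.coinv ∧ b' ∈ T.ca.coinv ∧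
        e ∈ T.ca.coinv ∧ e' ∈ T.ca.coinv ∧
        s (varpi1 T.LH ((T.t : T.Hˣ) : T.H)) =
          c • (T.FA.lact T.u' (T.FA.d T.u) + T.FA.lact b (T.FA.d b')) +
          (1 - c) • (T.FA.lact T.v' (T.FA.d T.v) + T.FA.lact e (T.FA.d e')) := by
  intro s hs
  obtain ⟨hcol, hvert⟩ := hs
  -- membership of the Cartan--Maurer form in `Λ¹`
  have hϖmem : varpi1 T.LH ((T.t : T.Hˣ) : T.H) ∈ Lam1 T.LH := by
    rw [T.lam1_span]
    exact Submodule.mem_span_singleton_self _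
  have hpv := hvert _ hϖmem
  obtain ⟨pq, hpq, -⟩ := T.free1 (s (varpi1 T.LH ((T.t : T.Hˣ) : T.H)))
  set p := pq.1 with hp_def
  set q := pq.2 with hq_def
  -- Step 1: the vertical condition gives `p * u = 1 + q * v`.
  rw [hpq, map_add, pv_lact_du, pv_lact_dv, xi_eq, TensorProduct.tmul_neg, varpi_tH] at hpv
  have hpu : p * T.u = 1 + q * T.v := by
    have h10 : (p * T.u - q * T.v - 1) ⊗ₜ[ℂ]
        (T.LH.lact ((T.t⁻¹ : T.Hˣ) : T.H) (T.LH.d ((T.t : T.Hˣ) : T.H)))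
        = (0 : T.A ⊗[ℂ] T.VH) := by
      rw [TensorProduct.sub_tmul, TensorProduct.sub_tmul, sub_eq_zero, sub_eq_add_neg]
      exact hpv
    have h11 := tensor_varpi_eq_zero T h10
    have h12 : p * T.u - (q * T.v + 1) = 0 := by rw [← sub_sub]; exact h11
    rw [sub_eq_zero] at h12
    rw [h12, add_comm]
  -- Step 2: the colinearity condition gives `ρ q = q ⊗ t`.
  have hc := hcol ((T.t : T.Hˣ) : T.H)
  have hrhs : connRHS1 T.LH T.FA s ((T.t : T.Hˣ) : T.H)
      = s (varpi1 T.LH ((T.t : T.Hˣ) : T.H)) ⊗ₜ[ℂ] (1 : T.H) := by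
    simp only [connRHS1, LinearMap.comp_apply, T.grouplike_t, LinearMap.rTensor_tmul,
      LinearEquiv.coe_coe, TensorProduct.comm_tmul, TensorProduct.assoc_tmul,
      TensorProduct.map_tmul, LinearMap.mul'_apply, antipode_tH T]
    rw [Units.inv_mul]
  rw [hrhs, hpq, map_add, T.FA.ρV_l, T.FA.ρV_l, T.FA.ρV_d, T.FA.ρV_d, T.ρu, T.ρv,
    LinearMap.rTensor_tmul, LinearMap.rTensor_tmul] at hc
  have hq : T.ca.ρ q = q ⊗ₜ[ℂ] ((T.t : T.Hˣ) : T.H) := by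
    have h5 := congrArg (LinearMap.rTensor T.H (Psi T)) hc
    rw [LinearMap.map_add, rTensor_Psi_actT_du, rTensor_Psi_actT_dv, zero_add,
      LinearMap.rTensor_tmul, map_add, Psi_lact_du, Psi_lact_dv, zero_add] at h5
    have h6 : ((1:T.A) ⊗ₜ[ℂ] ((T.t⁻¹ : T.Hˣ) : T.H)) * ((1:T.A) ⊗ₜ[ℂ] ((T.t : T.Hˣ) : T.H))
        = 1 := by
      rw [Algebra.TensorProduct.tmul_mul_tmul, one_mul, Units.inv_mul,
        Algebra.TensorProduct.one_def]
    calc T.ca.ρ q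
        = T.ca.ρ q * (((1:T.A) ⊗ₜ[ℂ] ((T.t⁻¹ : T.Hˣ) : T.H))
          * ((1:T.A) ⊗ₜ[ℂ] ((T.t : T.Hˣ) : T.H))) := by rw [h6, mul_one]
      _ = (T.ca.ρ q * ((1:T.A) ⊗ₜ[ℂ] ((T.t⁻¹ : T.Hˣ) : T.H)))
          * ((1:T.A) ⊗ₜ[ℂ] ((T.t : T.Hˣ) : T.H)) := by rw [mul_assoc]
      _ = (q ⊗ₜ[ℂ] (1 : T.H)) * ((1:T.A) ⊗ₜ[ℂ] ((T.t : T.Hˣ) : T.H)) := by rw [h5]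
      _ = q ⊗ₜ[ℂ] ((T.t : T.Hˣ) : T.H) := by
          rw [Algebra.TensorProduct.tmul_mul_tmul, mul_one, one_mul]
  -- Step 3: `ρ u' = u' ⊗ t⁻¹` and coinvariance of the witnesses.
  have h8 : T.ca.ρ T.u' * (T.u ⊗ₜ[ℂ] ((T.t : T.Hˣ) : T.H)) = 1 := by
    rw [← T.ρu, ← T.ca.ρ_mul, T.u'u, T.ca.ρ_one]
  have h9 : (T.u ⊗ₜ[ℂ] ((T.t : T.Hˣ) : T.H)) * (T.u' ⊗ₜ[ℂ] ((T.t⁻¹ : T.Hˣ) : T.H)) = 1 := by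
    rw [Algebra.TensorProduct.tmul_mul_tmul, T.uu', Units.mul_inv,
      Algebra.TensorProduct.one_def]
  have hρu' : T.ca.ρ T.u' = T.u' ⊗ₜ[ℂ] ((T.t⁻¹ : T.Hˣ) : T.H) := by
    calc T.ca.ρ T.u'
        = T.ca.ρ T.u' * ((T.u ⊗ₜ[ℂ] ((T.t : T.Hˣ) : T.H))
          * (T.u' ⊗ₜ[ℂ] ((T.t⁻¹ : T.Hˣ) : T.H))) := by rw [h9, mul_one]
      _ = (T.ca.ρ T.u' * (T.u ⊗ₜ[ℂ] ((T.t : T.Hˣ) : T.H)))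
          * (T.u' ⊗ₜ[ℂ] ((T.t⁻¹ : T.Hˣ) : T.H)) := by rw [mul_assoc]
      _ = T.u' ⊗ₜ[ℂ] ((T.t⁻¹ : T.Hˣ) : T.H) := by rw [h8, one_mul]
  have hbmem : q * T.u' ∈ T.ca.coinv := by
    rw [T.ca.mem_coinv, T.ca.ρ_mul, hq, hρu', Algebra.TensorProduct.tmul_mul_tmul,
      Units.mul_inv]
  have hb'mem : T.u * T.v ∈ T.ca.coinv := by
    rw [T.ca.mem_coinv]
    exact ρ_uv T
  -- Step 4: commutation relations.
  have h7 : T.u' * T.v = Complex.exp (↑T.θ * Complex.I) • (T.v * T.u') := by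
    have e0 : T.u' * ((T.v * T.u) * T.u') = T.u' * T.v := by
      rw [mul_assoc T.v, T.uu', mul_one]
    rw [← e0, T.rel, smul_mul_assoc, mul_smul_comm]
    rw [mul_assoc T.u, ← mul_assoc T.u', T.u'u, one_mul]
  have hvu' : T.v * T.u' = Complex.exp (-(↑T.θ * Complex.I)) • (T.u' * T.v) := by
    rw [h7, smul_smul, exp_neg_mul_exp, one_smul]
  have hp : p = T.u' + Complex.exp (-(↑T.θ * Complex.I)) • (q * (T.u' * T.v)) := by
    have e1 : p = (p * T.u) * T.u' := by rw [mul_assoc, T.uu', mul_one]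
    rw [e1, hpu, add_mul, one_mul, mul_assoc, hvu', mul_smul_comm]
  -- Step 5: assemble.
  refine ⟨1, q * T.u', T.u * T.v, 1, 1, hbmem, hb'mem, one_mem _, one_mem _, ?_⟩
  rw [hpq, sub_self, zero_smul, add_zero, one_smul]
  have hd : T.FA.d (T.u * T.v) = T.FA.lact T.u (T.FA.d T.v)
      + Complex.exp (-(↑T.θ * Complex.I)) • T.FA.lact T.v (T.FA.d T.u) := by
    rw [T.FA.leibniz, T.comm_du_v]
  have e2 : T.FA.lact (q * T.u') (T.FA.lact T.u (T.FA.d T.v)) = T.FA.lact q (T.FA.d T.v) := by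
    rw [← LinearMap.comp_apply, ← T.FA.lact_mul, mul_assoc, T.u'u, mul_one]
  have e3 : T.FA.lact (q * T.u') (T.FA.lact T.v (T.FA.d T.u))
      = T.FA.lact (q * (T.u' * T.v)) (T.FA.d T.u) := by
    rw [← LinearMap.comp_apply, ← T.FA.lact_mul, mul_assoc]
  rw [hd, map_add, map_smul, e2, e3, hp, map_add, LinearMap.add_apply, map_smul,
    LinearMap.smul_apply]
  abel

end QPBPaper
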